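/- arXiv:2501.15336 — 2 statements merged into one kernel-verified Lean document; each statement's English description precedes it below -/
import Mathlib

section
/- Let R be a commutative ring, S a commutative R-algebra equipped with an R-algebra involution σ, and let v₁ = (x₁,y₁), w₁ = (u₁,t₁) ∈ S². Write det(v,w) for the 2×2 determinant x·t' − y·u' of the rows v=(x,y), w=(u',t'). Suppose det(v₁, σ(v₁)) = det(w₁, σ(w₁)) and that this common value is a unit in S, where σ acts coordinatewise. Then there exists a unique matrix γ ∈ SL₂(S) with v₁·γ = w₁ and σ(v₁)·γ = σ(w₁), and this γ satisfies σ(γ) = γ (i.e., γ has entries in the σ-fixed subring). -/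
/-- Given an `R`-algebra involution `σ` of `S` and row vectors `v₁, w₁ ∈ S²` with
`det(v₁, σ v₁) = det(w₁, σ w₁)` a unit, there is a unique `γ ∈ SL₂(S)` with
`v₁ γ = w₁` and `σ(v₁) γ = σ(w₁)`, and this `γ` is fixed by `σ` entrywise. -/
theorem stmt_3 (R S : Type*) [CommRing R] [CommRing S] [Algebra R S]
    (σ : S →ₐ[R] S) (hσ : ∀ s, σ (σ s) = s)
    (v₁ w₁ : Fin 2 → S)
    (hdet : v₁ 0 * σ (v₁ 1) - v₁ 1 * σ (v₁ 0) = w₁ 0 * σ (w₁ 1) - w₁ 1 * σ (w₁ 0))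
    (hunit : IsUnit (v₁ 0 * σ (v₁ 1) - v₁ 1 * σ (v₁ 0))) :
    (∃! γ : Matrix.SpecialLinearGroup (Fin 2) S,
        Matrix.vecMul v₁ (γ : Matrix (Fin 2) (Fin 2) S) = w₁ ∧
        Matrix.vecMul (fun i => σ (v₁ i)) (γ : Matrix (Fin 2) (Fin 2) S) =
          fun i => σ (w₁ i)) ∧
    ∀ γ : Matrix.SpecialLinearGroup (Fin 2) S,
      (Matrix.vecMul v₁ (γ : Matrix (Fin 2) (Fin 2) S) = w₁ ∧
        Matrix.vecMul (fun i => σ (v₁ i)) (γ : Matrix (Fin 2) (Fin 2) S) =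
          fun i => σ (w₁ i)) →
      ∀ i j, σ ((γ : Matrix (Fin 2) (Fin 2) S) i j) = (γ : Matrix (Fin 2) (Fin 2) S) i j := by
  obtain ⟨u, hu⟩ := hunit
  set e : S := ↑u⁻¹ with he
  have h1 : e * (v₁ 0 * σ (v₁ 1) - v₁ 1 * σ (v₁ 0)) = 1 := by
    rw [← hu]; exact u.inv_mul
  have hσe : σ e = -e := by
    have h2 : σ e * σ (v₁ 0 * σ (v₁ 1) - v₁ 1 * σ (v₁ 0)) = 1 := by
      rw [← map_mul, h1, map_one]
    simp only [map_sub, map_mul, hσ] at h2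
    linear_combination (-(σ e)) * h1 - e * h2
  set a : S := e * (σ (v₁ 1) * w₁ 0 - v₁ 1 * σ (w₁ 0)) with ha
  set b : S := e * (σ (v₁ 1) * w₁ 1 - v₁ 1 * σ (w₁ 1)) with hb
  set c : S := e * (v₁ 0 * σ (w₁ 0) - σ (v₁ 0) * w₁ 0) with hc
  set d : S := e * (v₁ 0 * σ (w₁ 1) - σ (v₁ 0) * w₁ 1) with hd
  have hdet1 : (!![a, b; c, d] : Matrix (Fin 2) (Fin 2) S).det = 1 := by
    rw [Matrix.det_fin_two_of]
    rw [ha, hb, hc, hd]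
    linear_combination (e * (v₁ 0 * σ (v₁ 1) - v₁ 1 * σ (v₁ 0)) + 1) * h1 -
      e^2 * (v₁ 0 * σ (v₁ 1) - v₁ 1 * σ (v₁ 0)) * hdet
  set γ₀ : Matrix.SpecialLinearGroup (Fin 2) S := ⟨!![a, b; c, d], hdet1⟩ with hγ₀
  have huniq : ∀ γ : Matrix.SpecialLinearGroup (Fin 2) S,
      (Matrix.vecMul v₁ (γ : Matrix (Fin 2) (Fin 2) S) = w₁ ∧
        Matrix.vecMul (fun i => σ (v₁ i)) (γ : Matrix (Fin 2) (Fin 2) S) =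
          fun i => σ (w₁ i)) → (γ : Matrix (Fin 2) (Fin 2) S) = !![a, b; c, d] := by
    rintro γ ⟨hg1, hg2⟩
    have e10 := congrFun hg1 0
    have e11 := congrFun hg1 1
    have e20 := congrFun hg2 0
    have e21 := congrFun hg2 1
    simp [Matrix.vecMul, dotProduct, Fin.sum_univ_two] at e10 e11 e20 e21
    have ea : (γ : Matrix (Fin 2) (Fin 2) S) 0 0 = a := by
      rw [ha]
      linear_combination e * σ (v₁ 1) * e10 - e * v₁ 1 * e20 -
        ((γ : Matrix (Fin 2) (Fin 2) S) 0 0) * h1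
    have eb : (γ : Matrix (Fin 2) (Fin 2) S) 0 1 = b := by
      rw [hb]
      linear_combination e * σ (v₁ 1) * e11 - e * v₁ 1 * e21 -
        ((γ : Matrix (Fin 2) (Fin 2) S) 0 1) * h1
    have ec : (γ : Matrix (Fin 2) (Fin 2) S) 1 0 = c := by
      rw [hc]
      linear_combination e * v₁ 0 * e20 - e * σ (v₁ 0) * e10 -
        ((γ : Matrix (Fin 2) (Fin 2) S) 1 0) * h1
    have ed : (γ : Matrix (Fin 2) (Fin 2) S) 1 1 = d := by
      rw [hd]
      linear_combination e * v₁ 0 * e21 - e * σ (v₁ 0) * e11 -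
        ((γ : Matrix (Fin 2) (Fin 2) S) 1 1) * h1
    rw [Matrix.eta_fin_two (γ : Matrix (Fin 2) (Fin 2) S), ea, eb, ec, ed]
  have hsat : Matrix.vecMul v₁ (γ₀ : Matrix (Fin 2) (Fin 2) S) = w₁ ∧
      Matrix.vecMul (fun i => σ (v₁ i)) (γ₀ : Matrix (Fin 2) (Fin 2) S) =
        fun i => σ (w₁ i) := by
    constructor
    · funext i
      fin_cases i <;>
        simp [Matrix.vecMul, dotProduct, Fin.sum_univ_two, hγ₀, ha, hb, hc, hd] <;>
        [linear_combination (w₁ 0) * h1; linear_combination (w₁ 1) * h1]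
    · funext i
      fin_cases i <;>
        simp [Matrix.vecMul, dotProduct, Fin.sum_univ_two, hγ₀, ha, hb, hc, hd] <;>
        [linear_combination (σ (w₁ 0)) * h1; linear_combination (σ (w₁ 1)) * h1]
  refine ⟨⟨γ₀, hsat, fun γ hγ => Subtype.ext ((huniq γ hγ).trans rfl)⟩, ?_⟩
  intro γ hγ i j
  rw [huniq γ hγ]
  fin_cases i <;> fin_cases j
  · show σ a = a
    rw [ha]; simp only [map_mul, map_sub, hσe, hσ]; ring
  · show σ b = b
    rw [hb]; simp only [map_mul, map_sub, hσe, hσ]; ring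
  · show σ c = c
    rw [hc]; simp only [map_mul, map_sub, hσe, hσ]; ring
  · show σ d = d
    rw [hd]; simp only [map_mul, map_sub, hσe, hσ]; ring
end

section
/- Let R be a finite commutative ring and t ∈ R. Then the sequence (t^{n!})_{n≥1} is eventually constant, and its eventual value e is an idempotent of R such that t·e is invertible in the ring e·R (with identity e) and t·(1−e) is nilpotent in R. -/
/-- In a finite commutative ring, the sequence `t^{n!}` is eventually constant
with idempotent value `e`; `t·e` is invertible in the corner ring `e·R`
(with identity `e`), and `t·(1−e)` is nilpotent. -/
theorem stmt_8 (R : Type*) [CommRing R] [Finite R] (t : R) :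
    ∃ N : ℕ, ∃ e : R, 1 ≤ N ∧
      (∀ n, N ≤ n → t ^ (n.factorial) = e) ∧
      IsIdempotentElem e ∧
      (∃ s : R, e * s = s ∧ (t * e) * s = e) ∧
      IsNilpotent (t * (1 - e)) := by
  -- find m < n with t^m = t^n
  obtain ⟨a, b, hab, heq⟩ := Finite.exists_ne_map_eq_of_infinite (fun n : ℕ => t ^ n)
  wlog hlt : a < b generalizing a b
  · exact this b a hab.symm heq.symm (by omega)
  set m := a with hm
  set d := b - a with hd
  have hd1 : 1 ≤ d := by omega
  -- step lemma
  have step : ∀ j k, m ≤ k → t ^ k = t ^ (k + d * j) := by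
    intro j
    induction j with
    | zero => simp
    | succ j ih =>
      intro k hk
      have h1 : t ^ k = t ^ (k + d) := by
        have hb : b = a + d := by omega
        calc t ^ k = t ^ a * t ^ (k - a) := by rw [← pow_add]; congr 1; omega
          _ = t ^ b * t ^ (k - a) := by rw [heq]
          _ = t ^ (k + d) := by rw [← pow_add]; congr 1; omega
      calc t ^ k = t ^ (k + d) := h1
        _ = t ^ (k + d + d * j) := ih (k + d) (by omega)
        _ = t ^ (k + d * (j + 1)) := by congr 1; ring
  have key : ∀ p q, m ≤ p → p ≤ q → d ∣ q - p → t ^ p = t ^ q := by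
    intro p q hp hpq ⟨j, hj⟩
    have : q = p + d * j := by omega
    rw [this]; exact step j p hp
  set N := max (max m d) 1 with hN
  have hNm : m ≤ N := by omega
  have hNd : d ≤ N := by omega
  have hN1 : 1 ≤ N := by omega
  have hfac : ∀ n, N ≤ n → (m ≤ n.factorial ∧ d ∣ n.factorial) := by
    intro n hn
    constructor
    · exact le_trans (le_trans hNm hn) (Nat.self_le_factorial n)
    · exact Nat.dvd_factorial hd1 (by omega)
  refine ⟨N, t ^ N.factorial, hN1, ?_, ?_, ?_, ?_⟩
  · intro n hn
    obtain ⟨h1, h2⟩ := hfac n hn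
    obtain ⟨h1', h2'⟩ := hfac N le_rfl
    rcases le_total N.factorial n.factorial with h | h
    · exact (key _ _ h1' h (Nat.dvd_sub h2 h2')).symm
    · exact key _ _ h1 h (Nat.dvd_sub h2' h2)
  · -- idempotent
    obtain ⟨h1, h2⟩ := hfac N le_rfl
    have := key N.factorial (N.factorial + N.factorial) h1 (by omega)
      (by simpa using h2)
    simpa [IsIdempotentElem, ← pow_add] using this.symm
  · obtain ⟨h1, h2⟩ := hfac N le_rfl
    have hid : t ^ N.factorial * t ^ N.factorial = t ^ N.factorial := by
      have := key N.factorial (N.factorial + N.factorial) h1 (by omega) (by simpa using h2)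
      rw [← pow_add, ← this]
    refine ⟨t ^ (N.factorial - 1) * t ^ N.factorial, ?_, ?_⟩
    · calc t ^ N.factorial * (t ^ (N.factorial - 1) * t ^ N.factorial)
          = t ^ (N.factorial - 1) * (t ^ N.factorial * t ^ N.factorial) := by ring
        _ = t ^ (N.factorial - 1) * t ^ N.factorial := by rw [hid]
    · have hf1 : 1 ≤ N.factorial := Nat.one_le_iff_ne_zero.mpr (Nat.factorial_ne_zero N)
      calc t * t ^ N.factorial * (t ^ (N.factorial - 1) * t ^ N.factorial)
          = (t * t ^ (N.factorial - 1)) * (t ^ N.factorial * t ^ N.factorial) := by ring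
        _ = t ^ N.factorial * (t ^ N.factorial * t ^ N.factorial) := by
            congr 1
            rw [← pow_succ']
            congr 1
            omega
        _ = t ^ N.factorial * t ^ N.factorial := by rw [hid, hid]
        _ = t ^ N.factorial := hid
  · obtain ⟨h1, h2⟩ := hfac N le_rfl
    have hid : t ^ N.factorial * t ^ N.factorial = t ^ N.factorial := by
      have := key N.factorial (N.factorial + N.factorial) h1 (by omega) (by simpa using h2)
      rw [← pow_add, ← this]
    have hf1 : 1 ≤ N.factorial := Nat.one_le_iff_ne_zero.mpr (Nat.factorial_ne_zero N)
    refine ⟨N.factorial, ?_⟩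
    obtain ⟨k, hk⟩ : ∃ k, N.factorial = k + 1 := ⟨N.factorial - 1, by omega⟩
    calc (t * (1 - t ^ N.factorial)) ^ N.factorial
        = t ^ N.factorial * ((1 - t ^ N.factorial) ^ k * (1 - t ^ N.factorial)) := by
          have hpow : (1 - t ^ N.factorial) ^ N.factorial
              = (1 - t ^ N.factorial) ^ k * (1 - t ^ N.factorial) := by
            rw [← pow_succ, ← hk]
          rw [mul_pow, hpow]
      _ = (1 - t ^ N.factorial) ^ k * (t ^ N.factorial - t ^ N.factorial * t ^ N.factorial) := by
          ring
      _ = 0 := by rw [hid, sub_self, mul_zero]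
end
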